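/- Under monotone missingness, the neighboring-case (NC) restriction f(x_s | x_{<s}, T=t) = g(x_s | x_{<s}, T=s) for all t < s is equivalent to the condition that the ratio f(T=t | x_{≤s}) / f(T=s | x_{≤s}) is constant in x_s for all t < s (assuming strict positivity). -/

import Mathlib

/-!
Writing `g = f(·, t)` and `h = f(·, s)`, the neighboring-case identity at `x` says, after
cross-multiplying, that the odds `R_s(x) = marg g s x / marg h s x` agree with the coarser odds
`R_{s-1}(x)`. Since `R_{s-1}` only sees `x_{<s}`, the identity forces `R_s` to be constant in `x_s`.
Conversely, if `R_s(x) = r` for every value of `x_s`, summing `marg g s = r * marg h s` over `x_s`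
gives `marg g (s-1) = r * marg h (s-1)`, i.e. `R_{s-1}(x) = r`.
-/

open Finset

/-- Marginal density of the first `s` coordinates on the event `T = t`. -/
def marg {d : ℕ} {α : Type*} [Fintype α] [DecidableEq α]
    (f : (Fin d → α) → ℝ) (s : ℕ) (x : Fin d → α) : ℝ :=
  ∑ z : Fin d → α, if ∀ j : Fin d, (j : ℕ) < s → z j = x j then f z else 0

lemma agree_lt_succ_update_iff {d : ℕ} {α : Type*} (i : Fin d) (a : α) (x z : Fin d → α) :
    (∀ j : Fin d, (j : ℕ) < i + 1 → z j = Function.update x i a j) ↔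
      (∀ j : Fin d, (j : ℕ) < i → z j = x j) ∧ z i = a := by
  constructor
  · intro h
    refine ⟨fun j hj => ?_, by simpa using h i (Nat.lt_succ_self i)⟩
    simpa [Function.update_of_ne (Fin.ne_of_lt hj)] using h j (by omega)
  · rintro ⟨hlt, rfl⟩ j hj
    rcases (Nat.lt_succ_iff_lt_or_eq.mp hj) with hj | hj
    · rw [Function.update_of_ne (Fin.ne_of_lt hj)]
      exact hlt j hj
    · rw [Fin.ext hj, Function.update_self]

section marg

variable {d : ℕ} {α : Type*} [Fintype α] [DecidableEq α]

lemma marg_pos {g : (Fin d → α) → ℝ} (hg : ∀ z, 0 < g z) (s : ℕ) (x : Fin d → α) :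
    0 < marg g s x := by
  refine sum_pos' (fun z _ => ?_) ⟨x, mem_univ x, ?_⟩
  · split_ifs
    exacts [(hg z).le, le_rfl]
  · simpa using hg x

lemma marg_congr (g : (Fin d → α) → ℝ) (s : ℕ) {x y : Fin d → α}
    (h : ∀ j : Fin d, (j : ℕ) < s → x j = y j) :
    marg g s x = marg g s y := by
  refine sum_congr rfl fun z _ => if_congr ?_ rfl rfl
  exact forall₂_congr fun j hj => by rw [h j hj]

lemma marg_eq_sum_marg_succ_update (g : (Fin d → α) → ℝ) (i : Fin d) (x : Fin d → α) :
    marg g i x = ∑ a : α, marg g (i + 1) (Function.update x i a) := by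
  unfold marg
  rw [sum_comm]
  refine sum_congr rfl fun z _ => ?_
  simp only [agree_lt_succ_update_iff, ite_and]
  split_ifs <;> simp

lemma marg_div_marg_pred_eq_iff {g h : (Fin d → α) → ℝ} (hg : ∀ z, 0 < g z)
    (hh : ∀ z, 0 < h z) {s : ℕ} (hs : 0 < s) (hsd : s ≤ d) :
    (∀ x, marg g s x / marg g (s - 1) x = marg h s x / marg h (s - 1) x) ↔
      ∀ x y : Fin d → α, (∀ j : Fin d, (j : ℕ) + 1 < s → x j = y j) →
        marg g s x / marg h s x = marg g s y / marg h s y := by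
  have odds_eq_iff : ∀ x, marg g s x / marg g (s - 1) x = marg h s x / marg h (s - 1) x ↔
      marg g s x / marg h s x = marg g (s - 1) x / marg h (s - 1) x := fun x => by
    rw [div_eq_div_iff (marg_pos hg _ x).ne' (marg_pos hh _ x).ne',
      div_eq_div_iff (marg_pos hh _ x).ne' (marg_pos hh _ x).ne', mul_comm (marg h s x)]
  simp only [odds_eq_iff]
  constructor
  · intro H x y hxy
    have hpred : ∀ j : Fin d, (j : ℕ) < s - 1 → x j = y j := fun j hj => hxy j (by omega)
    rw [H x, H y, marg_congr g _ hpred, marg_congr h _ hpred]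
  · intro H x
    set i : Fin d := ⟨s - 1, by omega⟩
    have hi : (i : ℕ) + 1 = s := by simp only [i]; omega
    set r := marg g s x / marg h s x
    have hslice : ∀ a, marg g s (Function.update x i a) = r * marg h s (Function.update x i a) := by
      intro a
      rw [← div_eq_iff (marg_pos hh _ _).ne']
      refine H _ x fun j hj => Function.update_of_ne (fun hji => ?_) a x
      rw [hji] at hj
      omega
    have hpred : marg g (s - 1) x = r * marg h (s - 1) x := by
      rw [← hi] at hslice
      rw [marg_eq_sum_marg_succ_update g i x, marg_eq_sum_marg_succ_update h i x, mul_sum]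
      exact sum_congr rfl fun a _ => hslice a
    rw [hpred, mul_div_cancel_right₀ _ (marg_pos hh _ x).ne']

end marg

/-- Under monotone missingness with strictly positive full-data
density `f(x,t)`, the neighboring-case (NC) restriction
`f(x_s | x_{<s}, T = t) = g(x_s | x_{<s}, T = s)` for all `t < s ≤ d`
is equivalent to the condition that the ratio
`f(T = t | x_{≤s}) / f(T = s | x_{≤s})` is constant in `x_s` for all `t < s`
(i.e. depends only on `x_{<s}`; coordinates 0-indexed so `x_s` is coordinate
`s-1`). Conditional densities are ratios of marginals, and
`f(T = t | x_{≤s}) / f(T = s | x_{≤s}) = f(x_{≤s},t) / f(x_{≤s},s)`. -/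
theorem neighboring_case_iff_odds_constant
    {d : ℕ} {α : Type*} [Fintype α] [DecidableEq α]
    (f : (Fin d → α) → Fin (d + 1) → ℝ) (hf : ∀ x t, 0 < f x t) :
    (∀ (t : Fin (d + 1)) (s : ℕ) (hts : (t : ℕ) < s) (hsd : s ≤ d),
        ∀ x : Fin d → α,
        marg (fun z => f z t) s x / marg (fun z => f z t) (s - 1) x =
          marg (fun z => f z ⟨s, by omega⟩) s x /
            marg (fun z => f z ⟨s, by omega⟩) (s - 1) x)
      ↔
    (∀ (t : Fin (d + 1)) (s : ℕ) (hts : (t : ℕ) < s) (hsd : s ≤ d),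
        ∀ x y : Fin d → α, (∀ j : Fin d, (j : ℕ) + 1 < s → x j = y j) →
        marg (fun z => f z t) s x / marg (fun z => f z ⟨s, by omega⟩) s x =
          marg (fun z => f z t) s y / marg (fun z => f z ⟨s, by omega⟩) s y) :=
  forall_congr' fun t => forall_congr' fun s => forall_congr' fun hts => forall_congr' fun hsd =>
    marg_div_marg_pred_eq_iff (fun z => hf z t) (fun z => hf z _) (by omega) hsd
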